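/- Let X be a periodic semigroup, e an idempotent of X, and for n ≥ 1 let Z_n = {z ∈ Z(X) : z^n ∈ H_e}. If for some ℓ ≥ 1 the set Z_ℓ \ H_e is infinite, then there exist a finite set F ⊆ Z_ℓ and an infinite set A ⊆ Z_ℓ \ F·X¹ such that A·A ⊆ F ∪ H_e ⊆ F·X¹ (where F·X¹ = F ∪ {fx : f ∈ F, x ∈ X}). -/

import Mathlib

/-- `spow x n` denotes the power `x^(n+1)` in a semigroup (so exponents `n ≥ 1` are
the values `spow x (n-1)`). -/
def spow {S : Type*} [Semigroup S] (x : S) : ℕ → S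
  | 0 => x
  | n + 1 => spow x n * x

/-- The `H`-class of `a` in a semigroup `S`:
`H_a = {x ∈ S | xS¹ = aS¹ ∧ S¹x = S¹a}`, computed in `S¹ = WithOne S`. -/
def HClass {S : Type*} [Semigroup S] (a : S) : Set S :=
  {x | {y : WithOne S | ∃ s : WithOne S, y = (x : WithOne S) * s} =
         {y : WithOne S | ∃ s : WithOne S, y = (a : WithOne S) * s} ∧
       {y : WithOne S | ∃ s : WithOne S, y = s * (x : WithOne S)} =
         {y : WithOne S | ∃ s : WithOne S, y = s * (a : WithOne S)}}

/-- The center `Z(S)` of a semigroup. -/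
def centerSet (S : Type*) [Semigroup S] : Set S := {z : S | ∀ x : S, z * x = x * z}

/-- The Clifford part `H(S)`: the union of all `H`-classes of idempotents
(equivalently, of all maximal subgroups). -/
def CliffordPart (S : Type*) [Semigroup S] : Set S :=
  {x : S | ∃ e : S, IsIdempotentElem e ∧ x ∈ HClass e}

/-- A semigroup is chain-finite if it contains no infinite chain, where a chain
is a set `C` with `x * y ∈ {x, y}` for all `x, y ∈ C`. -/
def ChainFinite (S : Type*) [Semigroup S] : Prop :=
  ∀ C : Set S, (∀ x ∈ C, ∀ y ∈ C, x * y = x ∨ x * y = y) → C.Finite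

/-- A semigroup is periodic if every element has an idempotent power `x^n`, `n ≥ 1`. -/
def IsPeriodicSemigroup (S : Type*) [Semigroup S] : Prop :=
  ∀ x : S, ∃ n : ℕ, IsIdempotentElem (spow x n)

/-- The maximal subgroup `H_e` of an idempotent `e` is bounded: some power `n ≥ 1`
of every element equals `e`. -/
def BoundedHClass {S : Type*} [Semigroup S] (e : S) : Prop :=
  ∃ n : ℕ, ∀ x ∈ HClass e, spow x n = e

/-- A semigroup `X` is `T₁S`-closed if for every topological semigroup `Y`
satisfying the `T₁` separation axiom and every injective homomorphism `h : X → Y`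
with discrete image, the image of `h` is closed in `Y`. -/
def IsT1SClosed (X : Type*) [Semigroup X] : Prop :=
  ∀ (Y : Type*) [Semigroup Y] [TopologicalSpace Y] [ContinuousMul Y] [T1Space Y],
    ∀ h : X →ₙ* Y, Function.Injective h → DiscreteTopology (Set.range h) →
      IsClosed (Set.range h)

/-- A semigroup `X` is `TzS`-closed if for every Hausdorff zero-dimensional
topological semigroup `Y` (i.e. the clopen sets form a base of the topology) and
every injective homomorphism `h : X → Y` with discrete image, the image of `h`
is closed in `Y`. -/
def IsTzSClosed (X : Type*) [Semigroup X] : Prop :=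
  ∀ (Y : Type*) [Semigroup Y] [TopologicalSpace Y] [ContinuousMul Y] [T2Space Y],
    TopologicalSpace.IsTopologicalBasis {s : Set Y | IsClopen s} →
    ∀ h : X →ₙ* Y, Function.Injective h → DiscreteTopology (Set.range h) →
      IsClosed (Set.range h)

/-!
For central `z` with a power in `H_e`, `z ∈ H_e` iff `e * z = z`, iff `g ∣ z` in `X¹` for some
`g ∈ H_e`; so everything reduces to divisibility in `X¹ = WithOne X`.

Let `n` be least with `Z_n \ H_e` infinite; `n ≥ 2`, as `Z_1 \ H_e` is empty. If `n ≥ 3`,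
infinitely many `a ∈ Z_n \ (Z_(n-1) ∪ H_e)` share the power `a^(n-1) = t`, which lies in the
finite set `Z_2 \ H_e`. They form `A`, with `F = Z_(n-1) \ H_e`: `(ab)^(n-1) = t² ∈ H_e` puts
`ab` into `F ∪ H_e`, and `f ∣ a` with `f ∈ F` would give `f^(n-1) ∣ a^(n-1)`, so `t ∈ H_e`.
If `n = 2`, colour pairs from `Z_2 \ H_e` by their product, with `H_e` collapsed to a point, and
extract a row-constant sequence. Two products `ab`, `ac` with a common factor multiply into
`H_e`, being divisible by `a² ∈ H_e`. So either infinitely many colours form an `A` with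
`A·A ⊆ H_e`, or one colour `p ∉ H_e` occurs infinitely often and the corresponding terms of the
sequence form `A`, with `F = {p}`.
-/

open Set

section Combinatorics

variable {α β : Type*}

theorem Set.Infinite.exists_infinite_fiber_of_mapsTo {s : Set α} {t : Set β} {f : α → β}
    (hs : s.Infinite) (hf : MapsTo f s t) (ht : t.Finite) :
    ∃ b ∈ t, {a ∈ s | f a = b}.Infinite := by
  by_contra! h
  refine hs ((ht.biUnion h).subset fun a ha => ?_)
  exact mem_biUnion (hf ha) ⟨ha, rfl⟩

theorem Set.Infinite.exists_seq_rowConst {W : Set α} (hW : W.Infinite) (c : α → α → β)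
    (hc : ∀ a ∈ W, (c a '' W).Finite) :
    ∃ (s : ℕ → α) (v : ℕ → β), Function.Injective s ∧ (∀ i, s i ∈ W) ∧
      ∀ i j, i < j → c (s i) (s j) = v i := by
  have step : ∀ B : {B : Set α // B ⊆ W ∧ B.Infinite}, ∃ a ∈ B.1, ∃ b,
      ∃ B' : {B : Set α // B ⊆ W ∧ B.Infinite}, B'.1 ⊆ B.1 \ {a} ∧ ∀ x ∈ B'.1, c a x = b := by
    rintro ⟨B, hBW, hB⟩
    obtain ⟨a, ha⟩ := hB.nonempty
    obtain ⟨b, -, hb⟩ := (hB.sdiff (finite_singleton a)).exists_infinite_fiber_of_mapsTo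
      (fun x hx => mem_image_of_mem (c a) (hBW hx.1)) (hc a (hBW ha))
    exact ⟨a, ha, b, ⟨_, fun x hx => hBW hx.1.1, hb⟩, fun x hx => hx.1, fun x hx => hx.2⟩
  choose pick hpick value next hnext hvalue using step
  let B : ℕ → {B : Set α // B ⊆ W ∧ B.Infinite} := fun n => next^[n] ⟨W, subset_rfl, hW⟩
  have hB_succ (n : ℕ) : B (n + 1) = next (B n) := Function.iterate_succ_apply' _ _ _
  have hB_anti : Antitone fun n => (B n).1 := antitone_nat_of_succ_le fun n => by
    rw [hB_succ]; exact (hnext _).trans sdiff_subset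
  have hlt {i j : ℕ} (hij : i < j) :
      pick (B j) ≠ pick (B i) ∧ c (pick (B i)) (pick (B j)) = value (B i) := by
    have hj : pick (B j) ∈ (next (B i)).1 := hB_succ i ▸ hB_anti hij (hpick _)
    exact ⟨(hnext _ hj).2, hvalue _ _ hj⟩
  refine ⟨fun n => pick (B n), fun n => value (B n), ?_, fun n => (B n).2.1 (hpick _),
    fun i j hij => (hlt hij).2⟩
  intro i j hij
  rcases lt_trichotomy i j with h | h | h
  · exact absurd hij.symm (hlt h).1
  · exact h
  · exact absurd hij (hlt h).1

end Combinatorics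

theorem IsIdempotentElem.mul_dvd {M : Type*} [Monoid M] {E a b : M} (hE : IsIdempotentElem E)
    (hb : ∀ t, Commute b t) (ha : a ∣ E) (hbE : b ∣ E) : a * b ∣ E := by
  obtain ⟨s, hs⟩ := ha
  obtain ⟨t, ht⟩ := hbE
  refine ⟨s * t, ?_⟩
  calc E = (a * s) * (b * t) := by rw [← hs, ← ht, hE.eq]
    _ = a * b * (s * t) := by rw [mul_assoc, ← mul_assoc s, ← (hb s).eq, mul_assoc, ← mul_assoc]

theorem IsIdempotentElem.pow_succ_dvd {M : Type*} [Monoid M] {E a : M} (hE : IsIdempotentElem E)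
    (ha : ∀ t, Commute a t) (haE : a ∣ E) (n : ℕ) : a ^ (n + 1) ∣ E := by
  induction n with
  | zero => simpa using haE
  | succ n ih => rw [pow_succ]; exact hE.mul_dvd ha ih haE

section Semigroup

open WithOne

variable {X : Type*} [Semigroup X] {e : X}

theorem WithOne.coe_spow (x : X) (n : ℕ) :
    ((spow x n : X) : WithOne X) = (x : WithOne X) ^ (n + 1) := by
  induction n with
  | zero => simp [spow]
  | succ n ih => rw [spow, coe_mul, ih, pow_succ _ (n + 1)]

theorem WithOne.commute_coe_of_mem_centerSet {z : X} (hz : z ∈ centerSet X) (t : WithOne X) :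
    Commute (z : WithOne X) t := by
  induction t using WithOne.recOneCoe with
  | one => exact Commute.one_right _
  | coe a => exact congrArg _ (hz a)

theorem WithOne.dvd_coe_iff {f x : X} :
    (f : WithOne X) ∣ x ↔ x = f ∨ ∃ w, x = f * w := by
  constructor
  · rintro ⟨t, ht⟩
    induction t using WithOne.recOneCoe with
    | one => exact Or.inl (coe_inj.1 (by simpa using ht))
    | coe w => exact Or.inr ⟨w, coe_inj.1 ht⟩
  · rintro (rfl | ⟨w, rfl⟩)
    · exact dvd_rfl
    · exact ⟨w, rfl⟩

theorem mul_mem_centerSet {z w : X} (hz : z ∈ centerSet X) (hw : w ∈ centerSet X) :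
    z * w ∈ centerSet X := fun x => by
  rw [mul_assoc, hw x, ← mul_assoc, hz x, mul_assoc]

theorem spow_mem_centerSet {z : X} (hz : z ∈ centerSet X) (n : ℕ) : spow z n ∈ centerSet X := by
  induction n with
  | zero => exact hz
  | succ n ih => exact mul_mem_centerSet ih hz

theorem spow_mul {z : X} (hz : z ∈ centerSet X) (w : X) (n : ℕ) :
    spow (z * w) n = spow z n * spow w n := by
  rw [← coe_inj, coe_mul, coe_spow, coe_spow, coe_spow, coe_mul,
    (commute_coe_of_mem_centerSet hz w).mul_pow]

theorem spow_spow (x : X) (k j : ℕ) : spow (spow x k) j = spow x (k + j + k * j) := by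
  rw [← coe_inj, coe_spow, coe_spow, coe_spow, ← pow_mul]
  ring_nf

theorem mem_HClass_self (a : X) : a ∈ HClass a := ⟨rfl, rfl⟩

theorem dvd_and_dvd_of_mem_HClass {a h : X} (hh : h ∈ HClass a) :
    (a : WithOne X) ∣ h ∧ (h : WithOne X) ∣ a := by
  have hself (x : X) : (x : WithOne X) ∈ {y | ∃ s : WithOne X, y = x * s} := ⟨1, (mul_one _).symm⟩
  have ha := hself h
  have hh' := hself a
  rw [hh.1] at ha
  rw [← hh.1] at hh'
  exact ⟨ha, hh'⟩

theorem mul_eq_of_mem_HClass (he : IsIdempotentElem e) {h : X} (hh : h ∈ HClass e) :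
    e * h = h := by
  obtain ⟨s, hs⟩ := (dvd_and_dvd_of_mem_HClass hh).1
  rw [← coe_inj, coe_mul, hs, ← mul_assoc, ← coe_mul, he]

theorem mem_HClass_iff (he : IsIdempotentElem e) {z : X} (hz : z ∈ centerSet X) :
    z ∈ HClass e ↔ e * z = z ∧ (z : WithOne X) ∣ e := by
  refine ⟨fun h => ⟨mul_eq_of_mem_HClass he h, (dvd_and_dvd_of_mem_HClass h).2⟩, ?_⟩
  rintro ⟨hez, t, ht⟩
  have hze : z * e = z := (hz e).trans hez
  constructor <;> ext y <;> constructor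
  · rintro ⟨s, rfl⟩
    exact ⟨z * s, by rw [← mul_assoc, ← coe_mul, hez]⟩
  · rintro ⟨s, rfl⟩
    exact ⟨t * s, by rw [ht, mul_assoc]⟩
  · rintro ⟨s, rfl⟩
    exact ⟨s * z, by rw [mul_assoc, ← coe_mul, hze]⟩
  · rintro ⟨s, rfl⟩
    exact ⟨s * t, by rw [ht, ← mul_assoc, mul_assoc s, (commute_coe_of_mem_centerSet hz t).eq,
      mul_assoc]⟩

/-- The paper's `Z_(k+1)`, as `spow z k = z^(k+1)`. -/
def centralRoots (e : X) (k : ℕ) : Set X := {z | z ∈ centerSet X ∧ spow z k ∈ HClass e}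

theorem coe_dvd_of_spow_mem_HClass {z : X} {k : ℕ} (hk : spow z k ∈ HClass e) :
    (z : WithOne X) ∣ e :=
  (dvd_pow_self _ k.succ_ne_zero).trans (coe_spow z k ▸ (dvd_and_dvd_of_mem_HClass hk).2)

theorem mem_HClass_of_mul_eq (he : IsIdempotentElem e) {z : X} {k : ℕ}
    (hz : z ∈ centralRoots e k) (hez : e * z = z) : z ∈ HClass e :=
  (mem_HClass_iff he hz.1).2 ⟨hez, coe_dvd_of_spow_mem_HClass hz.2⟩

theorem mem_HClass_of_dvd (he : IsIdempotentElem e) {x g : X} {k : ℕ}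
    (hx : x ∈ centralRoots e k) (hg : g ∈ HClass e) (hgx : (g : WithOne X) ∣ x) :
    x ∈ HClass e := by
  obtain ⟨t, ht⟩ := hgx
  refine mem_HClass_of_mul_eq he hx ?_
  rw [← coe_inj, coe_mul, ht, ← mul_assoc, ← coe_mul, mul_eq_of_mem_HClass he hg]

theorem coe_dvd_of_mem_HClass {z h : X} {k : ℕ} (hz : spow z k ∈ HClass e) (hh : h ∈ HClass e) :
    (z : WithOne X) ∣ h :=
  (coe_dvd_of_spow_mem_HClass hz).trans (dvd_and_dvd_of_mem_HClass hh).1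

theorem mul_mem_HClass (he : IsIdempotentElem e) {g h : X} (hgc : g ∈ centerSet X)
    (hhc : h ∈ centerSet X) (hg : g ∈ HClass e) (hh : h ∈ HClass e) : g * h ∈ HClass e := by
  refine (mem_HClass_iff he (mul_mem_centerSet hgc hhc)).2 ⟨?_, ?_⟩
  · rw [← mul_assoc, mul_eq_of_mem_HClass he hg]
  · rw [coe_mul]
    exact (he.map coeMulHom).mul_dvd (commute_coe_of_mem_centerSet hhc)
      (dvd_and_dvd_of_mem_HClass hg).2 (dvd_and_dvd_of_mem_HClass hh).2

theorem spow_mem_HClass_of_le (he : IsIdempotentElem e) {z : X} {k n : ℕ}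
    (hz : z ∈ centralRoots e k) (hkn : k ≤ n) : spow z n ∈ HClass e := by
  refine (mem_HClass_iff he (spow_mem_centerSet hz.1 n)).2 ⟨?_, ?_⟩
  · induction n, hkn using Nat.le_induction with
    | base => exact mul_eq_of_mem_HClass he hz.2
    | succ n _ ih => rw [spow, ← mul_assoc, ih]
  · rw [coe_spow]
    exact (he.map coeMulHom).pow_succ_dvd (commute_coe_of_mem_centerSet hz.1)
      (coe_dvd_of_spow_mem_HClass hz.2) n

theorem centralRoots_mono (he : IsIdempotentElem e) {k n : ℕ} (hkn : k ≤ n) :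
    centralRoots e k ⊆ centralRoots e n :=
  fun _ hz => ⟨hz.1, spow_mem_HClass_of_le he hz hkn⟩

theorem mul_mem_centralRoots (he : IsIdempotentElem e) {z w : X} {k : ℕ}
    (hz : z ∈ centralRoots e k) (hw : w ∈ centralRoots e k) : z * w ∈ centralRoots e k :=
  ⟨mul_mem_centerSet hz.1 hw.1, spow_mul hz.1 w k ▸
    mul_mem_HClass he (spow_mem_centerSet hz.1 k) (spow_mem_centerSet hw.1 k) hz.2 hw.2⟩

theorem mem_union_image2_mul_iff {F : Set X} {x : X} :
    x ∈ F ∪ image2 (· * ·) F (univ : Set X) ↔ ∃ f ∈ F, (f : WithOne X) ∣ x := by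
  simp only [mem_union, mem_image2, mem_univ, true_and, dvd_coe_iff]
  constructor
  · rintro (hx | ⟨f, hf, w, rfl⟩)
    · exact ⟨x, hx, Or.inl rfl⟩
    · exact ⟨f, hf, Or.inr ⟨w, rfl⟩⟩
  · rintro ⟨f, hf, rfl | ⟨w, rfl⟩⟩
    · exact Or.inl hf
    · exact Or.inr ⟨f, hf, w, rfl⟩

theorem coe_spow_dvd_coe_spow {f a : X} (hf : f ∈ centerSet X) (hfa : (f : WithOne X) ∣ a)
    (n : ℕ) : ((spow f n : X) : WithOne X) ∣ (spow a n : X) := by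
  obtain ⟨t, ht⟩ := hfa
  rw [coe_spow, coe_spow, ht, (commute_coe_of_mem_centerSet hf t).mul_pow]
  exact dvd_mul_right _ _

/-- The pair `(F, A)` of the theorem, with `F · X¹` encoded by divisibility in `WithOne X`. -/
structure IsWitnessPair (e : X) (k : ℕ) (F A : Set X) : Prop where
  finite : F.Finite
  nonempty : F.Nonempty
  subset_left : F ⊆ centralRoots e k
  infinite : A.Infinite
  subset_right : A ⊆ centralRoots e k
  not_dvd : ∀ a ∈ A, ∀ f ∈ F, ¬ (f : WithOne X) ∣ a
  mul_mem : ∀ a ∈ A, ∀ b ∈ A, a * b ∈ F ∪ HClass e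

theorem IsWitnessPair.mono (he : IsIdempotentElem e) {k n : ℕ} {F A : Set X}
    (h : IsWitnessPair e k F A) (hkn : k ≤ n) : IsWitnessPair e n F A :=
  { h with
    subset_left := h.subset_left.trans (centralRoots_mono he hkn)
    subset_right := h.subset_right.trans (centralRoots_mono he hkn) }

theorem IsWitnessPair.singleton {k : ℕ} {p : X} {A : Set X} (hp : p ∈ centralRoots e k)
    (hA : A.Infinite) (hAZ : A ⊆ centralRoots e k) (hAp : ∀ a ∈ A, ¬ (p : WithOne X) ∣ a)
    (hAA : ∀ a ∈ A, ∀ b ∈ A, a * b ∈ {p} ∪ HClass e) : IsWitnessPair e k {p} A where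
  finite := finite_singleton p
  nonempty := singleton_nonempty p
  subset_left := singleton_subset_iff.2 hp
  infinite := hA
  subset_right := hAZ
  not_dvd a ha _ hf := hf ▸ hAp a ha
  mul_mem := hAA

theorem exists_isWitnessPair_of_finite (he : IsIdempotentElem e) {m : ℕ}
    (hfin : (centralRoots e (m + 1) \ HClass e).Finite)
    (hinf : (centralRoots e (m + 2) \ HClass e).Infinite) :
    ∃ A, IsWitnessPair e (m + 2) (centralRoots e (m + 1) \ HClass e) A := by
  set F := centralRoots e (m + 1) \ HClass e
  have hpow : MapsTo (fun x => spow x (m + 1)) ((centralRoots e (m + 2) \ HClass e) \ F)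
      (centralRoots e 1 \ HClass e) := fun x hx =>
    ⟨⟨spow_mem_centerSet hx.1.1.1 _, by
        rw [spow_spow]; exact spow_mem_HClass_of_le he hx.1.1 (by omega)⟩,
      fun hH => hx.2 ⟨⟨hx.1.1.1, hH⟩, hx.1.2⟩⟩
  obtain ⟨t, ht, hA⟩ := (hinf.sdiff hfin).exists_infinite_fiber_of_mapsTo hpow
    (hfin.subset (sdiff_subset_sdiff_left (centralRoots_mono he (by omega))))
  refine ⟨_, hfin, ⟨t, centralRoots_mono he (by omega) ht.1, ht.2⟩,
    fun f hf => centralRoots_mono he (by omega) hf.1, hA, fun a ha => ha.1.1.1, ?_, ?_⟩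
  · rintro a ⟨-, rfl⟩ f hf hfa
    exact ht.2 (mem_HClass_of_dvd he ht.1 hf.1.2 (coe_spow_dvd_coe_spow hf.1.1 hfa _))
  · rintro a ⟨ha, rfl⟩ b ⟨hb, hbt⟩
    by_cases hab : a * b ∈ HClass e
    · exact Or.inr hab
    · refine Or.inl ⟨⟨mul_mem_centerSet ha.1.1.1 hb.1.1.1, ?_⟩, hab⟩
      rw [spow_mul ha.1.1.1, hbt]
      exact ht.1.2

theorem forall_image_mul_of_lt {P : X → Prop} {s : ℕ → X} {S : Set ℕ}
    (hcomm : ∀ i j, s i * s j = s j * s i) (hdiag : ∀ i, P (s i * s i))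
    (hlt : ∀ i ∈ S, ∀ j ∈ S, i < j → P (s i * s j)) : ∀ x ∈ s '' S, ∀ y ∈ s '' S, P (x * y) := by
  rintro _ ⟨i, hi, rfl⟩ _ ⟨j, hj, rfl⟩
  rcases lt_trichotomy i j with h | rfl | h
  · exact hlt i hi j hj h
  · exact hdiag i
  · exact hcomm j i ▸ hlt j hj i hi h

theorem mul_mul_mul_mem_HClass (he : IsIdempotentElem e) {a b c : X}
    (ha : a ∈ centralRoots e 1) (hb : b ∈ centralRoots e 1) (hc : c ∈ centralRoots e 1) :
    (a * b) * (a * c) ∈ HClass e := by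
  refine mem_HClass_of_dvd he (mul_mem_centralRoots he (mul_mem_centralRoots he ha hb)
    (mul_mem_centralRoots he ha hc)) ha.2 ⟨(b * c : X), ?_⟩
  rw [← coe_mul, coe_inj]
  change (a * b) * (a * c) = (a * a) * (b * c)
  rw [mul_assoc, ← mul_assoc b, ← ha.1 b, mul_assoc, ← mul_assoc]

theorem exists_isWitnessPair_of_mul_mem (he : IsIdempotentElem e) {A : Set X}
    (hA : A.Infinite) (hAZ : A ⊆ centralRoots e 1 \ HClass e)
    (hAA : ∀ a ∈ A, ∀ b ∈ A, a * b ∈ HClass e) : ∃ F, IsWitnessPair e 1 F A := by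
  obtain ⟨a, ha⟩ := hA.nonempty
  refine ⟨_, .singleton (mul_mem_centralRoots he (hAZ ha).1 (hAZ ha).1) hA
    (fun x hx => (hAZ hx).1) (fun x hx hdvd => ?_) (fun x hx y hy => Or.inr (hAA x hx y hy))⟩
  exact (hAZ hx).2 (mem_HClass_of_dvd he (hAZ hx).1 (hAA a ha a ha) hdvd)

section Sequence

variable (he : IsIdempotentElem e) {s : ℕ → X} (hs : Function.Injective s)
  (hsZ : ∀ i, s i ∈ centralRoots e 1 \ HClass e)
include he hs hsZ

theorem exists_isWitnessPair_of_seq_mul_mem {S : Set ℕ}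
    (hS : S.Infinite) (hSH : ∀ i ∈ S, ∀ j, i < j → s i * s j ∈ HClass e) :
    ∃ F A, IsWitnessPair e 1 F A := by
  obtain ⟨F, hF⟩ := exists_isWitnessPair_of_mul_mem he (hS.image hs.injOn)
    (image_subset_iff.2 fun i _ => hsZ i)
    (forall_image_mul_of_lt (fun i j => (hsZ i).1.1 (s j)) (fun i => (hsZ i).1.2)
      fun i hi j _ hij => hSH i hi j hij)
  exact ⟨F, _, hF⟩

theorem exists_isWitnessPair_of_seq_mul_eq {S : Set ℕ} {p : X}
    (hS : S.Infinite) (hp : p ∉ HClass e) (hSp : ∀ i ∈ S, ∀ j, i < j → s i * s j = p) :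
    ∃ F A, IsWitnessPair e 1 F A := by
  obtain ⟨i₀, hi₀, -⟩ := hS.exists_gt 0
  have hpZ : p ∈ centralRoots e 1 :=
    hSp i₀ hi₀ _ (Nat.lt_succ_self _) ▸ mul_mem_centralRoots he (hsZ _).1 (hsZ _).1
  refine ⟨_, _, .singleton hpZ (hS.image hs.injOn)
    (image_subset_iff.2 fun i _ => (hsZ i).1) ?_
    (forall_image_mul_of_lt (fun i j => (hsZ i).1.1 (s j)) (fun i => Or.inr (hsZ i).1.2)
      fun i hi j _ hij => Or.inl (hSp i hi j hij))⟩
  -- `p ∣ s k` would make `s i * s i` divide `p = s k * s i` for `i > k` in `S`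
  rintro _ ⟨k, hk, rfl⟩ ⟨t, ht⟩
  obtain ⟨i, hi, hki⟩ := hS.exists_gt k
  refine hp (mem_HClass_of_dvd he hpZ (hsZ i).1.2 ⟨s (i + 1) * t, ?_⟩)
  have hsi := commute_coe_of_mem_centerSet (hsZ i).1.1
  calc (p : WithOne X) = s k * s i := by rw [← coe_mul, hSp k hk i hki]
    _ = (s i * s (i + 1) : X) * s i * t := by
      rw [ht, hSp i hi _ (Nat.lt_succ_self i), mul_assoc, mul_assoc, (hsi t).eq]
    _ = (s i * s i : X) * (s (i + 1) * t) := by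
      simp only [coe_mul, mul_assoc, (hsi (s (i + 1))).symm.left_comm]

theorem exists_isWitnessPair_of_seq {v : ℕ → X}
    (hv : ∀ i j, i < j → (v i ∈ HClass e → s i * s j ∈ HClass e ∧ v i = e) ∧
      (v i ∉ HClass e → s i * s j = v i)) :
    ∃ F A, IsWitnessPair e 1 F A := by
  by_cases hfib : ∃ p, {i | v i = p}.Infinite
  · obtain ⟨p, hp⟩ := hfib
    by_cases hpH : p ∈ HClass e
    · exact exists_isWitnessPair_of_seq_mul_mem he hs hsZ hp fun i hi j hij =>
        ((hv i j hij).1 (hi ▸ hpH)).1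
    · exact exists_isWitnessPair_of_seq_mul_eq he hs hsZ hp hpH fun i hi j hij =>
        hi ▸ (hv i j hij).2 (hi ▸ hpH)
  push Not at hfib
  have hrange : (range v \ {e}).Infinite := by
    refine Infinite.sdiff (fun hfin => infinite_univ (α := ℕ) ?_) (finite_singleton e)
    exact (hfin.preimage' fun p _ => hfib p).subset fun i _ => ⟨i, rfl⟩
  have hv_ne {i : ℕ} (hi : v i ≠ e) : v i ∉ HClass e ∧ ∀ j, i < j → s i * s j = v i :=
    have hH : v i ∉ HClass e := fun h => hi ((hv i (i + 1) i.lt_succ_self).1 h).2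
    ⟨hH, fun j hij => (hv i j hij).2 hH⟩
  refine (exists_isWitnessPair_of_mul_mem he hrange ?_ ?_).elim fun F hF => ⟨F, _, hF⟩
  · rintro _ ⟨⟨i, rfl⟩, hi⟩
    exact ⟨(hv_ne hi).2 _ i.lt_succ_self ▸ mul_mem_centralRoots he (hsZ i).1 (hsZ _).1,
      (hv_ne hi).1⟩
  · rintro _ ⟨⟨i, rfl⟩, hi⟩ _ ⟨⟨i', rfl⟩, hi'⟩
    have hj : i < max i i' + 1 ∧ i' < max i i' + 1 := by omega
    rw [← (hv_ne hi).2 _ hj.1, ← (hv_ne hi').2 _ hj.2, (hsZ i).1.1, (hsZ i').1.1]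
    exact mul_mul_mul_mem_HClass he (hsZ _).1 (hsZ i).1 (hsZ i').1

end Sequence

theorem exists_isWitnessPair_of_row_infinite (he : IsIdempotentElem e) {W : Set X}
    (hW : W ⊆ centralRoots e 1) {a : X} (ha : a ∈ W) (hrow : ((a * ·) '' W \ HClass e).Infinite) :
    ∃ F A, IsWitnessPair e 1 F A := by
  obtain ⟨F, hF⟩ := exists_isWitnessPair_of_mul_mem he hrow
    (fun _ ⟨⟨b, hb, hab⟩, hH⟩ => ⟨hab ▸ mul_mem_centralRoots he (hW ha) (hW hb), hH⟩)
    (by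
      rintro _ ⟨⟨b, hb, rfl⟩, -⟩ _ ⟨⟨c, hc, rfl⟩, -⟩
      exact mul_mul_mul_mem_HClass he (hW ha) (hW hb) (hW hc))
  exact ⟨F, _, hF⟩

theorem exists_isWitnessPair_one (he : IsIdempotentElem e)
    (hW : (centralRoots e 1 \ HClass e).Infinite) : ∃ F A, IsWitnessPair e 1 F A := by
  classical
  set W := centralRoots e 1 \ HClass e
  by_cases hrow : ∃ a ∈ W, ((a * ·) '' W \ HClass e).Infinite
  · obtain ⟨a, ha, h⟩ := hrow
    exact exists_isWitnessPair_of_row_infinite he (fun _ hx => hx.1) ha h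
  push Not at hrow
  set c : X → X → X := fun a b => if a * b ∈ HClass e then e else a * b
  have hc_mem {a b : X} (h : c a b ∈ HClass e) : a * b ∈ HClass e ∧ c a b = e := by
    by_cases hab : a * b ∈ HClass e <;> simp_all [c]
  have hc_not_mem {a b : X} (h : c a b ∉ HClass e) : a * b = c a b := by
    by_cases hab : a * b ∈ HClass e
    · exact absurd (by simpa [c, hab] using mem_HClass_self e) h
    · simp [c, hab]
  obtain ⟨s, v, hs, hsW, hsv⟩ := hW.exists_seq_rowConst c fun a ha =>
    ((hrow a ha).insert e).subset <| by
      rintro _ ⟨b, hb, rfl⟩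
      by_cases hab : a * b ∈ HClass e
      · simp [c, hab]
      · simp only [c, hab, if_false]; exact Or.inr ⟨⟨b, hb, rfl⟩, hab⟩
  exact exists_isWitnessPair_of_seq he hs hsW fun i j hij =>
    ⟨fun h => (hc_mem (hsv i j hij ▸ h)).imp_right (hsv i j hij).symm.trans,
      fun h => (hc_not_mem (hsv i j hij ▸ h)).trans (hsv i j hij)⟩

theorem exists_isWitnessPair (he : IsIdempotentElem e) {k : ℕ}
    (hk : (centralRoots e k \ HClass e).Infinite) : ∃ F A, IsWitnessPair e k F A := by
  induction k with
  | zero =>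
    obtain ⟨z, hz, hzH⟩ := hk.nonempty
    exact absurd hz.2 hzH
  | succ k ih =>
    rcases k with _ | m
    · exact exists_isWitnessPair_one he hk
    · by_cases hm : (centralRoots e (m + 1) \ HClass e).Infinite
      · obtain ⟨F, A, h⟩ := ih hm
        exact ⟨F, A, h.mono he (Nat.le_succ _)⟩
      · exact ⟨_, exists_isWitnessPair_of_finite he (Set.not_infinite.1 hm) hk⟩

end Semigroup

theorem statement17_general {X : Type*} [Semigroup X]
    (e : X) (he : IsIdempotentElem e)
    (ℓ : ℕ)
    (hinf : {z : X | z ∈ centerSet X ∧ spow z ℓ ∈ HClass e ∧ z ∉ HClass e}.Infinite) :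
    ∃ F A : Set X, F.Finite ∧
      F ⊆ {z : X | z ∈ centerSet X ∧ spow z ℓ ∈ HClass e} ∧
      A.Infinite ∧
      A ⊆ {z : X | z ∈ centerSet X ∧ spow z ℓ ∈ HClass e} \
            (F ∪ Set.image2 (· * ·) F (Set.univ : Set X)) ∧
      Set.image2 (· * ·) A A ⊆ F ∪ HClass e ∧
      F ∪ HClass e ⊆ F ∪ Set.image2 (· * ·) F (Set.univ : Set X) := by
  obtain ⟨F, A, h⟩ := exists_isWitnessPair he (k := ℓ)
    (hinf.mono fun z hz => ⟨⟨hz.1, hz.2.1⟩, hz.2.2⟩)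
  refine ⟨F, A, h.finite, h.subset_left, h.infinite, fun a ha => ⟨h.subset_right ha, ?_⟩, ?_, ?_⟩
  · rw [mem_union_image2_mul_iff]
    rintro ⟨f, hf, hfa⟩
    exact h.not_dvd a ha f hf hfa
  · rintro _ ⟨a, ha, b, hb, rfl⟩
    exact h.mul_mem a ha b hb
  · rintro x (hx | hx)
    · exact Or.inl hx
    · obtain ⟨f, hf⟩ := h.nonempty
      exact mem_union_image2_mul_iff.2 ⟨f, hf, coe_dvd_of_mem_HClass (h.subset_left hf).2 hx⟩

theorem statement17 {X : Type*} [Semigroup X]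
    (hper : IsPeriodicSemigroup X)
    (e : X) (he : IsIdempotentElem e)
    (ℓ : ℕ)
    (hinf : {z : X | z ∈ centerSet X ∧ spow z ℓ ∈ HClass e ∧ z ∉ HClass e}.Infinite) :
    ∃ F A : Set X, F.Finite ∧
      F ⊆ {z : X | z ∈ centerSet X ∧ spow z ℓ ∈ HClass e} ∧
      A.Infinite ∧
      A ⊆ {z : X | z ∈ centerSet X ∧ spow z ℓ ∈ HClass e} \
            (F ∪ Set.image2 (· * ·) F (Set.univ : Set X)) ∧
      Set.image2 (· * ·) A A ⊆ F ∪ HClass e ∧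
      F ∪ HClass e ⊆ F ∪ Set.image2 (· * ·) F (Set.univ : Set X) :=
  statement17_general e he ℓ hinf
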